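/- arXiv:2605.10490 — 3 statements merged into one kernel-verified Lean document; each statement's English description precedes it below -/
import Mathlib

section
/- Consider glucose–insulin dynamics on t ≥ 0 given by Ġ(t) = −S_G·G(t) − X(t)·(G(t) + G_b) + D(t), Ẋ(t) = −P₂·X(t) + P₃·I(t), İ(t) = −n·(I(t) + I_b) + u(t)/V, with patient parameters satisfying S_G ∈ [S̲_G, S̄_G], P₂ ∈ [P̲₂, P̄₂], P₃ ∈ [P̲₃, P̄₃], n ∈ [n̲, n̄] (all bounds positive) and meal disturbance 0 ≤ D(t) ≤ D̄. Let X̂, Î be differentiable estimate signals with |X(t) − X̂(t)| ≤ Δ_X, |I(t) − Î(t)| ≤ Δ_I, |Ẋ(t) − d/dt X̂(t)| ≤ Δ̇_X, |İ(t) − d/dt Î(t)| ≤ Δ̇_I for all t. Define the normalized glucose error e_G(t) = (G(t) − (Ḡ + G̲)/2)/((Ḡ − G̲)/2), the reference X_ref(t) = κ₁·Ψ(e_G(t)), the funnel ρ_X(t) = (p_X − q_X)e^{−μ_X t} + q_X, the normalized error e_X(t) = (X_ref(t) − X̂(t))/ρ_X(t), the reference I_ref(t) = κ₂·Ψ(e_X(t)),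 the funnel ρ_I(t) = (p_I − q_I)e^{−μ_I t} + q_I, the normalized error e_I(t) = (I_ref(t) − Î(t))/ρ_I(t), and the control input u(t) = ū·Ψ(e_I(t)). Suppose X_ref and I_ref are differentiable with |Ẋ_ref(t)| ≤ M_X and |İ_ref(t)| ≤ M_I for all t, the initial conditions satisfy |e_G(0)| < 1, |e_X(0)| < 1, |e_I(0)| < 1, the glucose bounds satisfy G̲ < 0 < Ḡ and G̲ + G_b > 0, and the feasibility conditions hold: (FC1a) (κ₁ − p_X − Δ_X)(Ḡ + G_b) > D̄; (FC1b) −S̲_G·G̲ > (p_X + Δ_X)(G̲ + G_b); (FC2a) P̲₃(κ₂ − p_I − Δ_I) − P̄₂(κ₁ − q_X + Δ_X) > M_X + μ_X(p_X − q_X) + Δ̇_X; (FC2b) P̲₂(q_X − Δ_X) − P̄₃(p_I + Δ_I) > M_X + μ_X(p_X − q_X) + Δ̇_X; (FC3a) ū/V − n̄(κ₂ − q_I + Δ_I + I_b) > M_I + μ_I(p_I − q_I) + Δ̇_I; (FC3b) n̲(q_I − Δ_I + I_b) > M_I + μ_I(p_I − q_I) + Δ̇_I. Then for all t ≥ 0: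 (i) G(t) ∈ [G̲, Ḡ], and (ii) u(t) ∈ [0, ū]. -/
/-!
Each of the three tubes (glucose, remote-insulin funnel, plasma-insulin funnel) is forward
invariant by a barrier argument: a differentiable error can leave a tube only through its
boundary, and on the boundary the reference saturates (Ψ = 0 or Ψ = 1), so the corresponding
feasibility condition makes the error's derivative point strictly inward. The cascade is resolved
from the inside out: the plasma-insulin funnel involves only the control `u`, the remote-insulin
funnel uses the plasma-insulin bound to estimate `I`, and the glucose tube uses the remote-insulin
bound to estimate `X`. The bound `u ∈ [0, ū]` is immediate from `0 ≤ Ψ ≤ 1`.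
-/

open Set Filter Topology

theorem image_lt_of_deriv_lt_deriv_boundary {f f' B B' : ℝ → ℝ} {a : ℝ}
    (hf : ∀ t ≥ a, HasDerivAt f (f' t) t) (hB : ∀ t ≥ a, HasDerivAt B (B' t) t)
    (ha : f a < B a) (bound : ∀ t ≥ a, f t = B t → f' t < B' t) :
    ∀ t ≥ a, f t < B t := by
  intro t ht
  have hle : ∀ s ∈ Icc a t, f s ≤ B s :=
    image_le_of_deriv_right_lt_deriv_boundary'
      (fun s hs => (hf s hs.1).continuousAt.continuousWithinAt)
      (fun s hs => (hf s hs.1).hasDerivWithinAt) ha.le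
      (fun s hs => (hB s hs.1).continuousAt.continuousWithinAt)
      (fun s hs => (hB s hs.1).hasDerivWithinAt) (fun s hs => bound s hs.1)
  refine (hle t ⟨ht, le_rfl⟩).lt_of_ne fun heq => ?_
  have hat : a < t := ht.lt_of_ne (by rintro rfl; exact ha.ne heq)
  -- `f - B ≤ 0` on `[a, t]` and vanishes at `t`, so its left difference quotients at `t` are
  -- nonnegative, whereas their limit `f' t - B' t` is negative.
  have hslope : Tendsto (slope (f - B) t) (𝓝[<] t) (𝓝 (f' t - B' t)) :=
    (hasDerivAt_iff_tendsto_slope.1 ((hf t ht).sub (hB t ht))).mono_left (nhdsLT_le_nhdsNE t)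
  have hleft : ∀ᶠ s in 𝓝[<] t, 0 ≤ slope (f - B) t s := by
    filter_upwards [Ioo_mem_nhdsLT hat] with s hs
    rw [slope_def_field]
    exact div_nonneg_of_nonpos (by simp [heq, hle s ⟨hs.1.le, hs.2.le⟩]) (by linarith [hs.2])
  linarith [ge_of_tendsto hslope hleft, bound t ht heq]

theorem abs_lt_of_deriv_boundary {e e' ρ ρ' : ℝ → ℝ} {a : ℝ}
    (he : ∀ t ≥ a, HasDerivAt e (e' t) t) (hρ : ∀ t ≥ a, HasDerivAt ρ (ρ' t) t)
    (ha : |e a| < ρ a) (hup : ∀ t ≥ a, e t = ρ t → e' t < ρ' t)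
    (hlo : ∀ t ≥ a, e t = -ρ t → -ρ' t < e' t) :
    ∀ t ≥ a, |e t| < ρ t := by
  have hlower := image_lt_of_deriv_lt_deriv_boundary (f := fun s => -ρ s)
    (fun t ht => (hρ t ht).neg) he (neg_lt_of_abs_lt ha) fun t ht h => hlo t ht h.symm
  have hupper := image_lt_of_deriv_lt_deriv_boundary he hρ (lt_of_abs_lt ha) hup
  exact fun t ht => abs_lt.2 ⟨hlower t ht, hupper t ht⟩

noncomputable def funnel (p q μ t : ℝ) : ℝ := (p - q) * Real.exp (-μ * t) + q

section Funnel

variable {p q μ : ℝ}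

theorem hasDerivAt_funnel (t : ℝ) :
    HasDerivAt (funnel p q μ) (-(μ * (p - q) * Real.exp (-μ * t))) t := by
  have h := ((((hasDerivAt_id t).const_mul (-μ)).exp).const_mul (p - q)).add_const q
  exact h.congr_deriv (by simp only [id_eq]; ring)

theorem le_funnel (hqp : q ≤ p) (t : ℝ) : q ≤ funnel p q μ t := by
  unfold funnel
  have := mul_nonneg (sub_nonneg.2 hqp) (Real.exp_pos (-μ * t)).le
  linarith

theorem funnel_pos (hq : 0 < q) (hqp : q ≤ p) (t : ℝ) : 0 < funnel p q μ t :=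
  hq.trans_le (le_funnel hqp t)

theorem funnel_le (hqp : q ≤ p) (hμ : 0 ≤ μ) {t : ℝ} (ht : 0 ≤ t) : funnel p q μ t ≤ p := by
  unfold funnel
  have : Real.exp (-μ * t) ≤ 1 := Real.exp_le_one_iff.2 (by nlinarith)
  nlinarith

theorem neg_le_deriv_funnel (hqp : q ≤ p) (hμ : 0 ≤ μ) {t : ℝ} (ht : 0 ≤ t) :
    -(μ * (p - q)) ≤ -(μ * (p - q) * Real.exp (-μ * t)) := by
  have : Real.exp (-μ * t) ≤ 1 := Real.exp_le_one_iff.2 (by nlinarith)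
  have := mul_nonneg hμ (sub_nonneg.2 hqp)
  nlinarith

end Funnel

theorem abs_div_lt_one_iff {x ρ : ℝ} (hρ : 0 < ρ) : |x / ρ| < 1 ↔ |x| < ρ := by
  rw [abs_div, abs_of_pos hρ, div_lt_one hρ]

theorem mul_mem_Icc_zero_self {κ x : ℝ} (hκ : 0 ≤ κ) (hx : x ∈ Icc (0 : ℝ) 1) :
    κ * x ∈ Icc 0 κ :=
  ⟨mul_nonneg hκ hx.1, mul_le_of_le_one_right hκ hx.2⟩

section FunnelError

variable {p q μ : ℝ} {r y e : ℝ → ℝ}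

theorem funnel_forward_invariant {M : ℝ} {r' y' : ℝ → ℝ} (hq : 0 < q) (hqp : q ≤ p) (hμ : 0 ≤ μ)
    (he : ∀ t, e t = (r t - y t) / funnel p q μ t)
    (hr : ∀ t ≥ 0, HasDerivAt r (r' t) t) (hr' : ∀ t ≥ 0, |r' t| ≤ M)
    (hy : ∀ t ≥ 0, HasDerivAt y (y' t) t) (h0 : |e 0| < 1)
    (hup : ∀ t ≥ 0, e t = 1 → r t - y t = funnel p q μ t → M + μ * (p - q) < y' t)
    (hlo : ∀ t ≥ 0, e t = -1 → r t - y t = -funnel p q μ t → y' t < -(M + μ * (p - q))) :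
    ∀ t ≥ 0, |e t| < 1 := by
  have hpos := funnel_pos (μ := μ) hq hqp
  have habs : ∀ t, |e t| < 1 ↔ |r t - y t| < funnel p q μ t := fun t => by
    rw [he t, abs_div_lt_one_iff (hpos t)]
  have hinv := abs_lt_of_deriv_boundary (e := fun t => r t - y t)
    (fun t ht => (hr t ht).sub (hy t ht)) (fun t _ => hasDerivAt_funnel t) ((habs 0).1 h0) ?_ ?_
  · exact fun t ht => (habs t).2 (hinv t ht)
  · intro t ht hb
    have he1 : e t = 1 := by rw [he t, hb, div_self (hpos t).ne']
    linarith [hup t ht he1 hb, (abs_le.1 (hr' t ht)).2, neg_le_deriv_funnel hqp hμ ht]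
  · intro t ht hb
    have he1 : e t = -1 := by rw [he t, hb, neg_div, div_self (hpos t).ne']
    linarith [hlo t ht he1 hb, (abs_le.1 (hr' t ht)).1, neg_le_deriv_funnel hqp hμ ht]

theorem abs_sub_lt_of_funnel {Δ : ℝ} {x : ℝ → ℝ} (hq : 0 < q) (hqp : q ≤ p) (hμ : 0 ≤ μ)
    (he : ∀ t, e t = (r t - y t) / funnel p q μ t) {t : ℝ} (ht : 0 ≤ t) (he1 : |e t| < 1)
    (hx : |x t - y t| ≤ Δ) : |r t - x t| < p + Δ := by
  rw [he t, abs_div_lt_one_iff (funnel_pos hq hqp t)] at he1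
  calc |r t - x t| ≤ |r t - y t| + |y t - x t| := abs_sub_le _ _ _
    _ = |r t - y t| + |x t - y t| := by rw [abs_sub_comm (y t)]
    _ < p + Δ := add_lt_add_of_lt_of_le (he1.trans_le (funnel_le hqp hμ ht)) hx

end FunnelError

theorem plasma_insulin_funnel_invariant {Ψ : ℝ → ℝ} (hΨ0 : ∀ s ≤ (0 : ℝ), Ψ s = 0)
    (hΨ1 : ∀ s ≥ (1 : ℝ), Ψ s = 1)
    {n nlow nbar V I_b κ₂ ubar Δ_I Δ'_I M_I p_I q_I μ_I : ℝ}
    (hnlow : 0 < nlow) (hn : nlow ≤ n ∧ n ≤ nbar) (hIb : 0 < I_b) (hΔI : 0 < Δ_I)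
    (hΔ'I : 0 < Δ'_I) (hMI : 0 < M_I) (hqI : 0 < q_I) (hpI : q_I < p_I) (hμI : 0 < μ_I)
    (hκ₂ : p_I + Δ_I < κ₂)
    {I Ihat Ihat' Iref Iref' eI u : ℝ → ℝ}
    (hIref : ∀ t, Iref t ∈ Icc 0 κ₂)
    (heI : ∀ t, eI t = (Iref t - Ihat t) / funnel p_I q_I μ_I t)
    (hudef : ∀ t, u t = ubar * Ψ (eI t))
    (hIhat : ∀ t ≥ (0 : ℝ), HasDerivAt Ihat (Ihat' t) t)
    (hIerr : ∀ t ≥ (0 : ℝ), |I t - Ihat t| ≤ Δ_I)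
    (hIerr' : ∀ t ≥ (0 : ℝ), |(-(n * (I t + I_b)) + u t / V) - Ihat' t| ≤ Δ'_I)
    (hIref' : ∀ t ≥ (0 : ℝ), HasDerivAt Iref (Iref' t) t)
    (hIrefbnd : ∀ t ≥ (0 : ℝ), |Iref' t| ≤ M_I)
    (hinitI : |eI 0| < 1)
    (hFC3a : ubar / V - nbar * (κ₂ - q_I + Δ_I + I_b) > M_I + μ_I * (p_I - q_I) + Δ'_I)
    (hFC3b : nlow * (q_I - Δ_I + I_b) > M_I + μ_I * (p_I - q_I) + Δ'_I) :
    ∀ t ≥ 0, |eI t| < 1 := by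
  have hn0 : 0 ≤ n := hnlow.le.trans hn.1
  refine funnel_forward_invariant hqI hpI.le hμI.le heI hIref' hIrefbnd hIhat hinitI ?_ ?_
  · intro t ht he1 hb
    have hu : u t = ubar := by rw [hudef t, he1, hΨ1 1 le_rfl, mul_one]
    have hI : I t + I_b ≤ κ₂ - q_I + Δ_I + I_b := by
      linarith [(abs_le.1 (hIerr t ht)).2, (hIref t).2, le_funnel (μ := μ_I) hpI.le t]
    have hnI : n * (I t + I_b) ≤ nbar * (κ₂ - q_I + Δ_I + I_b) :=
      (mul_le_mul_of_nonneg_left hI hn0).trans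
        (mul_le_mul_of_nonneg_right hn.2 (by linarith))
    have hd := hIerr' t ht
    rw [hu] at hd
    linarith [(abs_le.1 hd).2]
  · intro t ht he1 hb
    have hu : u t = 0 := by rw [hudef t, he1, hΨ0 (-1) (by norm_num), mul_zero]
    have hI : q_I - Δ_I + I_b ≤ I t + I_b := by
      linarith [(abs_le.1 (hIerr t ht)).1, (hIref t).1, le_funnel (μ := μ_I) hpI.le t]
    have hK : 0 < q_I - Δ_I + I_b :=
      pos_of_mul_pos_right (by nlinarith [mul_pos hμI (sub_pos.2 hpI)]) hnlow.le
    have hnI : nlow * (q_I - Δ_I + I_b) ≤ n * (I t + I_b) :=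
      (mul_le_mul_of_nonneg_right hn.1 hK.le).trans (mul_le_mul_of_nonneg_left hI hn0)
    have hd := hIerr' t ht
    rw [hu, zero_div] at hd
    linarith [(abs_le.1 hd).1]

theorem remote_insulin_funnel_invariant {Ψ : ℝ → ℝ} (hΨ0 : ∀ s ≤ (0 : ℝ), Ψ s = 0)
    (hΨ1 : ∀ s ≥ (1 : ℝ), Ψ s = 1)
    {P2 P2low P2bar P3 P3low P3bar κ₁ κ₂ Δ_X Δ_I Δ'_X M_X p_X q_X μ_X p_I q_I μ_I : ℝ}
    (hP2low : 0 < P2low) (hP2 : P2low ≤ P2 ∧ P2 ≤ P2bar)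
    (hP3low : 0 < P3low) (hP3 : P3low ≤ P3 ∧ P3 ≤ P3bar)
    (hΔX : 0 < Δ_X) (hΔI : 0 < Δ_I) (hΔ'X : 0 < Δ'_X) (hMX : 0 < M_X)
    (hqX : 0 < q_X) (hpX : q_X < p_X) (hμX : 0 < μ_X)
    (hqI : 0 < q_I) (hpI : q_I < p_I) (hμI : 0 < μ_I)
    (hκ₁ : p_X + Δ_X < κ₁) (hκ₂ : p_I + Δ_I < κ₂)
    {X I Xhat Xhat' Ihat Xref Xref' eX Iref eI : ℝ → ℝ}
    (hXref : ∀ t, Xref t ∈ Icc 0 κ₁)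
    (heX : ∀ t, eX t = (Xref t - Xhat t) / funnel p_X q_X μ_X t)
    (hIrefdef : ∀ t, Iref t = κ₂ * Ψ (eX t))
    (heI : ∀ t, eI t = (Iref t - Ihat t) / funnel p_I q_I μ_I t)
    (hI : ∀ t ≥ 0, |eI t| < 1)
    (hXhat : ∀ t ≥ (0 : ℝ), HasDerivAt Xhat (Xhat' t) t)
    (hXerr : ∀ t ≥ (0 : ℝ), |X t - Xhat t| ≤ Δ_X)
    (hIerr : ∀ t ≥ (0 : ℝ), |I t - Ihat t| ≤ Δ_I)
    (hXerr' : ∀ t ≥ (0 : ℝ), |(-(P2 * X t) + P3 * I t) - Xhat' t| ≤ Δ'_X)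
    (hXref' : ∀ t ≥ (0 : ℝ), HasDerivAt Xref (Xref' t) t)
    (hXrefbnd : ∀ t ≥ (0 : ℝ), |Xref' t| ≤ M_X)
    (hinitX : |eX 0| < 1)
    (hFC2a : P3low * (κ₂ - p_I - Δ_I) - P2bar * (κ₁ - q_X + Δ_X)
        > M_X + μ_X * (p_X - q_X) + Δ'_X)
    (hFC2b : P2low * (q_X - Δ_X) - P3bar * (p_I + Δ_I) > M_X + μ_X * (p_X - q_X) + Δ'_X) :
    ∀ t ≥ 0, |eX t| < 1 := by
  have hP2₀ : 0 ≤ P2 := hP2low.le.trans hP2.1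
  have hP3₀ : 0 ≤ P3 := hP3low.le.trans hP3.1
  refine funnel_forward_invariant hqX hpX.le hμX.le heX hXref' hXrefbnd hXhat hinitX ?_ ?_
  · intro t ht he1 hb
    have hIref : Iref t = κ₂ := by rw [hIrefdef t, he1, hΨ1 1 le_rfl, mul_one]
    have hIlow : κ₂ - p_I - Δ_I ≤ I t := by
      have := abs_sub_lt_of_funnel hqI hpI.le hμI.le heI ht (hI t ht) (hIerr t ht)
      linarith [(abs_lt.1 this).2]
    have hXup : X t ≤ κ₁ - q_X + Δ_X := by
      linarith [(abs_le.1 (hXerr t ht)).2, (hXref t).2, le_funnel (μ := μ_X) hpX.le t]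
    have hP2X : P2 * X t ≤ P2bar * (κ₁ - q_X + Δ_X) :=
      (mul_le_mul_of_nonneg_left hXup hP2₀).trans
        (mul_le_mul_of_nonneg_right hP2.2 (by linarith))
    have hP3I : P3low * (κ₂ - p_I - Δ_I) ≤ P3 * I t :=
      (mul_le_mul_of_nonneg_right hP3.1 (by linarith)).trans (mul_le_mul_of_nonneg_left hIlow hP3₀)
    linarith [(abs_le.1 (hXerr' t ht)).2]
  · intro t ht he1 hb
    have hIref : Iref t = 0 := by rw [hIrefdef t, he1, hΨ0 (-1) (by norm_num), mul_zero]
    have hIup : I t ≤ p_I + Δ_I := by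
      have := abs_sub_lt_of_funnel hqI hpI.le hμI.le heI ht (hI t ht) (hIerr t ht)
      linarith [(abs_lt.1 this).1]
    have hXlow : q_X - Δ_X ≤ X t := by
      linarith [(abs_le.1 (hXerr t ht)).1, (hXref t).1, le_funnel (μ := μ_X) hpX.le t]
    have hqΔ : 0 < q_X - Δ_X := by
      refine pos_of_mul_pos_right ?_ hP2low.le
      nlinarith [mul_pos (hP3low.trans_le (hP3.1.trans hP3.2)) (add_pos (hqI.trans hpI) hΔI),
        mul_pos hμX (sub_pos.2 hpX)]
    have hP2X : P2low * (q_X - Δ_X) ≤ P2 * X t :=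
      (mul_le_mul_of_nonneg_right hP2.1 hqΔ.le).trans (mul_le_mul_of_nonneg_left hXlow hP2₀)
    have hP3I : P3 * I t ≤ P3bar * (p_I + Δ_I) :=
      (mul_le_mul_of_nonneg_left hIup hP3₀).trans
        (mul_le_mul_of_nonneg_right hP3.2 (by linarith))
    linarith [(abs_le.1 (hXerr' t ht)).1]

theorem glucose_tube_invariant {Ψ : ℝ → ℝ} (hΨ0 : ∀ s ≤ (0 : ℝ), Ψ s = 0)
    (hΨ1 : ∀ s ≥ (1 : ℝ), Ψ s = 1)
    {S_G SGlow G_b κ₁ Δ_X Dbar p_X q_X μ_X Glow Gbar : ℝ}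
    (hSGlow : 0 < SGlow) (hSG : SGlow ≤ S_G)
    (hqX : 0 < q_X) (hpX : q_X < p_X) (hμX : 0 < μ_X)
    (hGlow : Glow < 0) (hGbar : 0 < Gbar) (hGlGb : 0 < Glow + G_b)
    {G X Xhat D eG Xref eX : ℝ → ℝ}
    (heG : ∀ t, eG t = (G t - (Gbar + Glow) / 2) / ((Gbar - Glow) / 2))
    (hXrefdef : ∀ t, Xref t = κ₁ * Ψ (eG t))
    (heX : ∀ t, eX t = (Xref t - Xhat t) / funnel p_X q_X μ_X t)
    (hX : ∀ t ≥ 0, |eX t| < 1)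
    (hdynG : ∀ t ≥ (0 : ℝ), HasDerivAt G (-(S_G * G t) - X t * (G t + G_b) + D t) t)
    (hD : ∀ t ≥ (0 : ℝ), 0 ≤ D t ∧ D t ≤ Dbar)
    (hXerr : ∀ t ≥ (0 : ℝ), |X t - Xhat t| ≤ Δ_X)
    (hinitG : |eG 0| < 1)
    (hFC1a : (κ₁ - p_X - Δ_X) * (Gbar + G_b) > Dbar)
    (hFC1b : -(SGlow * Glow) > (p_X + Δ_X) * (Glow + G_b)) :
    ∀ t ≥ 0, Glow < G t ∧ G t < Gbar := by
  have hwidth : 0 < (Gbar - Glow) / 2 := by linarith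
  have hXnear (t : ℝ) (ht : 0 ≤ t) : |Xref t - X t| < p_X + Δ_X :=
    abs_sub_lt_of_funnel hqX hpX.le hμX.le heX ht (hX t ht) (hXerr t ht)
  have htube := abs_lt_of_deriv_boundary (e := fun t => G t - (Gbar + Glow) / 2)
    (ρ := fun _ => (Gbar - Glow) / 2) (ρ' := fun _ => 0)
    (fun t ht => (hdynG t ht).sub_const _) (fun t _ => hasDerivAt_const t _)
    (by simpa only [heG, abs_div_lt_one_iff hwidth] using hinitG) ?_ ?_
  · intro t ht
    have := abs_lt.1 (htube t ht)
    constructor <;> linarith [this.1, this.2]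
  · intro t ht hb
    have hGt : G t = Gbar := by linarith
    have hXref : Xref t = κ₁ := by
      rw [hXrefdef t, heG t, hb, div_self hwidth.ne', hΨ1 1 le_rfl, mul_one]
    have hXG : (κ₁ - p_X - Δ_X) * (Gbar + G_b) ≤ X t * (Gbar + G_b) :=
      mul_le_mul_of_nonneg_right (by linarith [(abs_lt.1 (hXnear t ht)).2]) (by linarith)
    have hSG' : 0 ≤ S_G * Gbar := mul_nonneg (hSGlow.le.trans hSG) hGbar.le
    show -(S_G * G t) - X t * (G t + G_b) + D t < 0
    rw [hGt]
    linarith [(hD t ht).2]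
  · intro t ht hb
    have hGt : G t = Glow := by linarith
    have hXref : Xref t = 0 := by
      rw [hXrefdef t, heG t, hb, neg_div, div_self hwidth.ne', hΨ0 (-1) (by norm_num), mul_zero]
    have hXG : X t * (Glow + G_b) ≤ (p_X + Δ_X) * (Glow + G_b) :=
      mul_le_mul_of_nonneg_right (by linarith [(abs_lt.1 (hXnear t ht)).1]) hGlGb.le
    have hSG' : S_G * Glow ≤ SGlow * Glow := mul_le_mul_of_nonpos_right hSG hGlow.le
    show -0 < -(S_G * G t) - X t * (G t + G_b) + D t
    rw [hGt]
    linarith [(hD t ht).1]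

theorem glycemic_safety_tube_control_general
    -- the bounded transformation function Ψ
    (Ψ : ℝ → ℝ)
    (hΨ0 : ∀ s ≤ (0 : ℝ), Ψ s = 0)
    (hΨ1 : ∀ s ≥ (1 : ℝ), Ψ s = 1)
    (hΨrange : ∀ s, 0 ≤ Ψ s ∧ Ψ s ≤ 1)
    -- patient parameters and their uncertainty bounds
    (S_G SGlow SGbar P2 P2low P2bar P3 P3low P3bar n nlow nbar : ℝ)
    (hSGlow : 0 < SGlow) (hSG : SGlow ≤ S_G ∧ S_G ≤ SGbar)
    (hP2low : 0 < P2low) (hP2 : P2low ≤ P2 ∧ P2 ≤ P2bar)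
    (hP3low : 0 < P3low) (hP3 : P3low ≤ P3 ∧ P3 ≤ P3bar)
    (hnlow : 0 < nlow) (hn : nlow ≤ n ∧ n ≤ nbar)
    -- positive constants
    (V I_b G_b κ₁ κ₂ ubar Δ_X Δ_I Δ'_X Δ'_I M_X M_I Dbar : ℝ)
    (hIb : 0 < I_b)
    (hκ₁ : 0 < κ₁) (hκ₂ : 0 < κ₂) (hubar : 0 < ubar)
    (hΔX : 0 < Δ_X) (hΔI : 0 < Δ_I) (hΔ'X : 0 < Δ'_X) (hΔ'I : 0 < Δ'_I)
    (hMX : 0 < M_X) (hMI : 0 < M_I) (hDbar : 0 < Dbar)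
    -- funnel parameters
    (p_X q_X μ_X p_I q_I μ_I : ℝ)
    (hqX : 0 < q_X) (hpX : q_X < p_X) (hμX : 0 < μ_X)
    (hqI : 0 < q_I) (hpI : q_I < p_I) (hμI : 0 < μ_I)
    -- glucose safety bounds
    (Glow Gbar : ℝ) (hGlow : Glow < 0) (hGbar : 0 < Gbar) (hGlGb : 0 < Glow + G_b)
    -- signals
    (G X I Xhat Ihat D Xhat' Ihat' Xref' Iref' : ℝ → ℝ)
    -- definitions of the tube/funnel quantities and the control law
    (eG : ℝ → ℝ)
    (heG : ∀ t, eG t = (G t - (Gbar + Glow) / 2) / ((Gbar - Glow) / 2))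
    (Xref : ℝ → ℝ) (hXrefdef : ∀ t, Xref t = κ₁ * Ψ (eG t))
    (ρX : ℝ → ℝ) (hρXdef : ∀ t, ρX t = (p_X - q_X) * Real.exp (-μ_X * t) + q_X)
    (eX : ℝ → ℝ) (heX : ∀ t, eX t = (Xref t - Xhat t) / ρX t)
    (Iref : ℝ → ℝ) (hIrefdef : ∀ t, Iref t = κ₂ * Ψ (eX t))
    (ρI : ℝ → ℝ) (hρIdef : ∀ t, ρI t = (p_I - q_I) * Real.exp (-μ_I * t) + q_I)
    (eI : ℝ → ℝ) (heI : ∀ t, eI t = (Iref t - Ihat t) / ρI t)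
    (u : ℝ → ℝ) (hudef : ∀ t, u t = ubar * Ψ (eI t))
    -- system dynamics on t ≥ 0
    (hdynG : ∀ t ≥ (0 : ℝ),
        HasDerivAt G (-(S_G * G t) - X t * (G t + G_b) + D t) t)
    -- bounded meal disturbance
    (hD : ∀ t ≥ (0 : ℝ), 0 ≤ D t ∧ D t ≤ Dbar)
    -- state estimates: differentiable, with bounded position/derivative errors
    (hXhat : ∀ t ≥ (0 : ℝ), HasDerivAt Xhat (Xhat' t) t)
    (hIhat : ∀ t ≥ (0 : ℝ), HasDerivAt Ihat (Ihat' t) t)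
    (hXerr : ∀ t ≥ (0 : ℝ), |X t - Xhat t| ≤ Δ_X)
    (hIerr : ∀ t ≥ (0 : ℝ), |I t - Ihat t| ≤ Δ_I)
    (hXerr' : ∀ t ≥ (0 : ℝ), |(-(P2 * X t) + P3 * I t) - Xhat' t| ≤ Δ'_X)
    (hIerr' : ∀ t ≥ (0 : ℝ), |(-(n * (I t + I_b)) + u t / V) - Ihat' t| ≤ Δ'_I)
    -- references: differentiable with bounded derivatives
    (hXref' : ∀ t ≥ (0 : ℝ), HasDerivAt Xref (Xref' t) t)
    (hXrefbnd : ∀ t ≥ (0 : ℝ), |Xref' t| ≤ M_X)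
    (hIref' : ∀ t ≥ (0 : ℝ), HasDerivAt Iref (Iref' t) t)
    (hIrefbnd : ∀ t ≥ (0 : ℝ), |Iref' t| ≤ M_I)
    -- initial conditions
    (hinitG : |eG 0| < 1) (hinitX : |eX 0| < 1) (hinitI : |eI 0| < 1)
    -- feasibility conditions
    (hFC1a : (κ₁ - p_X - Δ_X) * (Gbar + G_b) > Dbar)
    (hFC1b : -(SGlow * Glow) > (p_X + Δ_X) * (Glow + G_b))
    (hFC2a : P3low * (κ₂ - p_I - Δ_I) - P2bar * (κ₁ - q_X + Δ_X)
        > M_X + μ_X * (p_X - q_X) + Δ'_X)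
    (hFC2b : P2low * (q_X - Δ_X) - P3bar * (p_I + Δ_I)
        > M_X + μ_X * (p_X - q_X) + Δ'_X)
    (hFC3a : ubar / V - nbar * (κ₂ - q_I + Δ_I + I_b)
        > M_I + μ_I * (p_I - q_I) + Δ'_I)
    (hFC3b : nlow * (q_I - Δ_I + I_b) > M_I + μ_I * (p_I - q_I) + Δ'_I) :
    ∀ t ≥ (0 : ℝ), (Glow ≤ G t ∧ G t ≤ Gbar) ∧ (0 ≤ u t ∧ u t ≤ ubar) := by
  obtain rfl : ρX = funnel p_X q_X μ_X := funext hρXdef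
  obtain rfl : ρI = funnel p_I q_I μ_I := funext hρIdef
  have hκ₁_gt : p_X + Δ_X < κ₁ := by
    linarith [pos_of_mul_pos_left (hDbar.trans hFC1a) (by linarith : (0 : ℝ) ≤ Gbar + G_b)]
  have hκ₂_gt : p_I + Δ_I < κ₂ := by
    have : 0 < P2bar * (κ₁ - q_X + Δ_X) := mul_pos (by linarith) (by linarith)
    linarith [pos_of_mul_pos_right (by linarith [mul_pos hμX (sub_pos.2 hpX)] :
      0 < P3low * (κ₂ - p_I - Δ_I)) hP3low.le]
  have hI := plasma_insulin_funnel_invariant hΨ0 hΨ1 hnlow hn hIb hΔI hΔ'I hMI hqI hpI hμI hκ₂_gt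
    (fun t => hIrefdef t ▸ mul_mem_Icc_zero_self hκ₂.le (hΨrange _)) heI hudef hIhat hIerr
    hIerr' hIref' hIrefbnd hinitI hFC3a hFC3b
  have hX := remote_insulin_funnel_invariant hΨ0 hΨ1 hP2low hP2 hP3low hP3 hΔX hΔI hΔ'X hMX
    hqX hpX hμX hqI hpI hμI hκ₁_gt hκ₂_gt
    (fun t => hXrefdef t ▸ mul_mem_Icc_zero_self hκ₁.le (hΨrange _)) heX hIrefdef heI hI hXhat
    hXerr hIerr hXerr' hXref' hXrefbnd hinitX hFC2a hFC2b
  have hG := glucose_tube_invariant hΨ0 hΨ1 hSGlow hSG.1 hqX hpX hμX hGlow hGbar hGlGb heG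
    hXrefdef heX hX hdynG hD hXerr hinitG hFC1a hFC1b
  intro t ht
  exact ⟨⟨(hG t ht).1.le, (hG t ht).2.le⟩, hudef t ▸ mul_mem_Icc_zero_self hubar.le (hΨrange _)⟩

/-- **Glycemic Safety Tube Control (Theorem 1).**
For the Bergman glucose–insulin dynamics with uncertain but bounded patient
parameters, bounded unannounced meal disturbance, and bounded state-estimation
errors, the cascaded GSTC control law `u(t) = ū·Ψ(e_I(t))` (built from the
glucose safety tube, the remote-insulin funnel and the plasma-insulin funnel)
keeps the glucose within the safe range `[G̲, Ḡ]` and the insulin infusion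
within the pump limits `[0, ū]` for all `t ≥ 0`, provided the trajectories
start strictly inside the tubes and the feasibility conditions
FC1a–FC3b hold. -/
theorem glycemic_safety_tube_control
    -- the bounded transformation function Ψ
    (Ψ : ℝ → ℝ)
    (hΨC1 : ContDiff ℝ 1 Ψ)
    (hΨmono : Monotone Ψ)
    (hΨ0 : ∀ s ≤ (0 : ℝ), Ψ s = 0)
    (hΨ1 : ∀ s ≥ (1 : ℝ), Ψ s = 1)
    (hΨrange : ∀ s, 0 ≤ Ψ s ∧ Ψ s ≤ 1)
    -- patient parameters and their uncertainty bounds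
    (S_G SGlow SGbar P2 P2low P2bar P3 P3low P3bar n nlow nbar : ℝ)
    (hSGlow : 0 < SGlow) (hSG : SGlow ≤ S_G ∧ S_G ≤ SGbar)
    (hP2low : 0 < P2low) (hP2 : P2low ≤ P2 ∧ P2 ≤ P2bar)
    (hP3low : 0 < P3low) (hP3 : P3low ≤ P3 ∧ P3 ≤ P3bar)
    (hnlow : 0 < nlow) (hn : nlow ≤ n ∧ n ≤ nbar)
    -- positive constants
    (V I_b G_b κ₁ κ₂ ubar Δ_X Δ_I Δ'_X Δ'_I M_X M_I Dbar : ℝ)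
    (hV : 0 < V) (hIb : 0 < I_b) (hGb : 0 < G_b)
    (hκ₁ : 0 < κ₁) (hκ₂ : 0 < κ₂) (hubar : 0 < ubar)
    (hΔX : 0 < Δ_X) (hΔI : 0 < Δ_I) (hΔ'X : 0 < Δ'_X) (hΔ'I : 0 < Δ'_I)
    (hMX : 0 < M_X) (hMI : 0 < M_I) (hDbar : 0 < Dbar)
    -- funnel parameters
    (p_X q_X μ_X p_I q_I μ_I : ℝ)
    (hqX : 0 < q_X) (hpX : q_X < p_X) (hμX : 0 < μ_X)
    (hqI : 0 < q_I) (hpI : q_I < p_I) (hμI : 0 < μ_I)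
    -- glucose safety bounds
    (Glow Gbar : ℝ) (hGlow : Glow < 0) (hGbar : 0 < Gbar) (hGlGb : 0 < Glow + G_b)
    -- signals
    (G X I Xhat Ihat D Xhat' Ihat' Xref' Iref' : ℝ → ℝ)
    -- definitions of the tube/funnel quantities and the control law
    (eG : ℝ → ℝ)
    (heG : ∀ t, eG t = (G t - (Gbar + Glow) / 2) / ((Gbar - Glow) / 2))
    (Xref : ℝ → ℝ) (hXrefdef : ∀ t, Xref t = κ₁ * Ψ (eG t))
    (ρX : ℝ → ℝ) (hρXdef : ∀ t, ρX t = (p_X - q_X) * Real.exp (-μ_X * t) + q_X)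
    (eX : ℝ → ℝ) (heX : ∀ t, eX t = (Xref t - Xhat t) / ρX t)
    (Iref : ℝ → ℝ) (hIrefdef : ∀ t, Iref t = κ₂ * Ψ (eX t))
    (ρI : ℝ → ℝ) (hρIdef : ∀ t, ρI t = (p_I - q_I) * Real.exp (-μ_I * t) + q_I)
    (eI : ℝ → ℝ) (heI : ∀ t, eI t = (Iref t - Ihat t) / ρI t)
    (u : ℝ → ℝ) (hudef : ∀ t, u t = ubar * Ψ (eI t))
    -- system dynamics on t ≥ 0
    (hdynG : ∀ t ≥ (0 : ℝ),
        HasDerivAt G (-(S_G * G t) - X t * (G t + G_b) + D t) t)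
    (hdynX : ∀ t ≥ (0 : ℝ), HasDerivAt X (-(P2 * X t) + P3 * I t) t)
    (hdynI : ∀ t ≥ (0 : ℝ), HasDerivAt I (-(n * (I t + I_b)) + u t / V) t)
    -- bounded meal disturbance
    (hD : ∀ t ≥ (0 : ℝ), 0 ≤ D t ∧ D t ≤ Dbar)
    -- state estimates: differentiable, with bounded position/derivative errors
    (hXhat : ∀ t ≥ (0 : ℝ), HasDerivAt Xhat (Xhat' t) t)
    (hIhat : ∀ t ≥ (0 : ℝ), HasDerivAt Ihat (Ihat' t) t)
    (hXerr : ∀ t ≥ (0 : ℝ), |X t - Xhat t| ≤ Δ_X)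
    (hIerr : ∀ t ≥ (0 : ℝ), |I t - Ihat t| ≤ Δ_I)
    (hXerr' : ∀ t ≥ (0 : ℝ), |(-(P2 * X t) + P3 * I t) - Xhat' t| ≤ Δ'_X)
    (hIerr' : ∀ t ≥ (0 : ℝ), |(-(n * (I t + I_b)) + u t / V) - Ihat' t| ≤ Δ'_I)
    -- references: differentiable with bounded derivatives
    (hXref' : ∀ t ≥ (0 : ℝ), HasDerivAt Xref (Xref' t) t)
    (hXrefbnd : ∀ t ≥ (0 : ℝ), |Xref' t| ≤ M_X)
    (hIref' : ∀ t ≥ (0 : ℝ), HasDerivAt Iref (Iref' t) t)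
    (hIrefbnd : ∀ t ≥ (0 : ℝ), |Iref' t| ≤ M_I)
    -- initial conditions
    (hinitG : |eG 0| < 1) (hinitX : |eX 0| < 1) (hinitI : |eI 0| < 1)
    -- feasibility conditions
    (hFC1a : (κ₁ - p_X - Δ_X) * (Gbar + G_b) > Dbar)
    (hFC1b : -(SGlow * Glow) > (p_X + Δ_X) * (Glow + G_b))
    (hFC2a : P3low * (κ₂ - p_I - Δ_I) - P2bar * (κ₁ - q_X + Δ_X)
        > M_X + μ_X * (p_X - q_X) + Δ'_X)
    (hFC2b : P2low * (q_X - Δ_X) - P3bar * (p_I + Δ_I)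
        > M_X + μ_X * (p_X - q_X) + Δ'_X)
    (hFC3a : ubar / V - nbar * (κ₂ - q_I + Δ_I + I_b)
        > M_I + μ_I * (p_I - q_I) + Δ'_I)
    (hFC3b : nlow * (q_I - Δ_I + I_b) > M_I + μ_I * (p_I - q_I) + Δ'_I) :
    ∀ t ≥ (0 : ℝ), (Glow ≤ G t ∧ G t ≤ Gbar) ∧ (0 ≤ u t ∧ u t ≤ ubar) :=
  glycemic_safety_tube_control_general Ψ hΨ0 hΨ1 hΨrange S_G SGlow SGbar P2 P2low P2bar P3 P3low
    P3bar n nlow nbar hSGlow hSG hP2low hP2 hP3low hP3 hnlow hn V I_b G_b κ₁ κ₂ ubar Δ_X Δ_I Δ'_X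
    Δ'_I M_X M_I Dbar hIb hκ₁ hκ₂ hubar hΔX hΔI hΔ'X hΔ'I hMX hMI hDbar p_X q_X μ_X p_I q_I μ_I hqX
    hpX hμX hqI hpI hμI Glow Gbar hGlow hGbar hGlGb G X I Xhat Ihat D Xhat' Ihat' Xref' Iref' eG heG
    Xref hXrefdef ρX hρXdef eX heX Iref hIrefdef ρI hρIdef eI heI u hudef hdynG hD hXhat hIhat hXerr
    hIerr hXerr' hIerr' hXref' hXrefbnd hIref' hIrefbnd hinitG hinitX hinitI hFC1a hFC1b hFC2a hFC2b
    hFC3a hFC3b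
end

section
/- Consider the glucose dynamics Ġ(t) = −S_G·G(t) − X(t)·(G(t) + G_b) + D(t) on t ≥ 0 with S_G ∈ [S̲_G, S̄_G] for positive bounds, and meal disturbance 0 ≤ D(t) ≤ D̄. Let glucose bounds satisfy G̲ < 0 < Ḡ and G̲ + G_b > 0. Define the normalized glucose error e_G(t) = (G(t) − (Ḡ + G̲)/2)/((Ḡ − G̲)/2) and the reference X_ref(t) = κ₁·Ψ(e_G(t)). Let X̂ be an estimate signal with |X(t) − X̂(t)| ≤ Δ_X for all t, and suppose the funnel invariance from Stage II holds, i.e., |X_ref(t) − X̂(t)| < ρ_X(t) ≤ p_X for all t ≥ 0. Suppose G(0) ∈ (G̲, Ḡ), and the feasibility conditions hold: (FC1a) (κ₁ − p_X − Δ_X)(Ḡ + G_b) > D̄; (FC1b) −S̲_G·G̲ > (p_X + Δ_X)(G̲ + G_b). Then G(t) ∈ [G̲, Ḡ] for all t ≥ 0. -/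
/-- **Stage III of the proof of Theorem 1: invariance of the glucose safety
constraint.** For the glucose dynamics `Ġ = −S_G·G − X(G + G_b) + D` with
bounded meal disturbance, the reference `X_ref(t) = κ₁·Ψ(e_G(t))`, the Stage II
funnel invariance `|X_ref − X̂| < ρ_X ≤ p_X`, the estimation bound
`|X − X̂| ≤ Δ_X`, and the feasibility conditions FC1a–FC1b, the glucose stays
in the safe range `[G̲, Ḡ]` for all `t ≥ 0`. -/
theorem stageIII_glucose_safety_invariance
    -- the bounded transformation function Ψ
    (Ψ : ℝ → ℝ)
    (hΨC1 : ContDiff ℝ 1 Ψ)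
    (hΨmono : Monotone Ψ)
    (hΨ0 : ∀ s ≤ (0 : ℝ), Ψ s = 0)
    (hΨ1 : ∀ s ≥ (1 : ℝ), Ψ s = 1)
    (hΨrange : ∀ s, 0 ≤ Ψ s ∧ Ψ s ≤ 1)
    -- parameters
    (S_G SGlow SGbar κ₁ G_b Δ_X Dbar : ℝ)
    (hSGlow : 0 < SGlow) (hSG : SGlow ≤ S_G ∧ S_G ≤ SGbar)
    (hκ₁ : 0 < κ₁) (hGb : 0 < G_b) (hΔX : 0 < Δ_X) (hDbar : 0 < Dbar)
    -- funnel parameters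
    (p_X q_X μ_X : ℝ) (hqX : 0 < q_X) (hpX : q_X < p_X) (hμX : 0 < μ_X)
    -- glucose safety bounds
    (Glow Gbar : ℝ) (hGlow : Glow < 0) (hGbar : 0 < Gbar) (hGlGb : 0 < Glow + G_b)
    -- signals and definitions
    (G X Xhat D : ℝ → ℝ)
    (eG : ℝ → ℝ)
    (heG : ∀ t, eG t = (G t - (Gbar + Glow) / 2) / ((Gbar - Glow) / 2))
    (Xref : ℝ → ℝ) (hXrefdef : ∀ t, Xref t = κ₁ * Ψ (eG t))
    (ρX : ℝ → ℝ) (hρXdef : ∀ t, ρX t = (p_X - q_X) * Real.exp (-μ_X * t) + q_X)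
    -- glucose dynamics on t ≥ 0 with bounded meal disturbance
    (hdynG : ∀ t ≥ (0 : ℝ),
        HasDerivAt G (-(S_G * G t) - X t * (G t + G_b) + D t) t)
    (hD : ∀ t ≥ (0 : ℝ), 0 ≤ D t ∧ D t ≤ Dbar)
    -- estimation bound
    (hXerr : ∀ t ≥ (0 : ℝ), |X t - Xhat t| ≤ Δ_X)
    -- Stage II funnel invariance: |X_ref − X̂| < ρ_X ≤ p_X on t ≥ 0
    (hStageII : ∀ t ≥ (0 : ℝ), |Xref t - Xhat t| < ρX t ∧ ρX t ≤ p_X)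
    -- initial condition
    (hinitG : Glow < G 0 ∧ G 0 < Gbar)
    -- feasibility conditions
    (hFC1a : (κ₁ - p_X - Δ_X) * (Gbar + G_b) > Dbar)
    (hFC1b : -(SGlow * Glow) > (p_X + Δ_X) * (Glow + G_b)) :
    ∀ t ≥ (0 : ℝ), Glow ≤ G t ∧ G t ≤ Gbar := by

  -- derivative expression
  set F : ℝ → ℝ := fun t => -(S_G * G t) - X t * (G t + G_b) + D t with hF
  intro t ht
  have hcont : ContinuousOn G (Set.Icc 0 t) := fun x hx =>
    ((hdynG x hx.1).continuousAt).continuousWithinAt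
  have hderiv : ∀ x ∈ Set.Ico (0:ℝ) t, HasDerivWithinAt G (F x) (Set.Ici x) x :=
    fun x hx => ((hdynG x hx.1).hasDerivWithinAt)
  have hGbGl : (0:ℝ) < Gbar - Glow := by linarith
  -- upper bound
  have hupper : ∀ x ∈ Set.Icc (0:ℝ) t, G x ≤ Gbar := by
    refine image_le_of_deriv_right_lt_deriv_boundary (B := fun _ => Gbar)
      (B' := fun _ => 0) hcont hderiv hinitG.2.le (fun x => hasDerivAt_const x Gbar) ?_
    intro x hx hGx
    have hx0 := hx.1
    have heq : eG x = 1 := by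
      rw [heG, hGx]; field_simp; ring
    have hXref : Xref x = κ₁ := by rw [hXrefdef, heq, hΨ1 1 le_rfl, mul_one]
    have h2 := hStageII x hx0
    have h3 := hXerr x hx0
    have hXhat : κ₁ - p_X < Xhat x := by
      have := abs_lt.mp (lt_of_lt_of_le h2.1 h2.2)
      rw [hXref] at this; linarith [this.1]
    have hX : κ₁ - p_X - Δ_X < X x := by
      have := abs_le.mp h3; linarith [this.2]
    have hD1 := hD x hx0
    have hSG0 : 0 ≤ S_G * Gbar := mul_nonneg (by linarith [hSG.1]) hGbar.le
    have hGbGb : 0 < Gbar + G_b := by linarith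
    have hmul : (κ₁ - p_X - Δ_X) * (Gbar + G_b) < X x * (Gbar + G_b) :=
      mul_lt_mul_of_pos_right hX hGbGb
    simp only [hF, hGx]
    nlinarith [hD1.2]
  -- lower bound
  have hlower : ∀ x ∈ Set.Icc (0:ℝ) t, -G x ≤ -Glow := by
    refine image_le_of_deriv_right_lt_deriv_boundary (f := fun s => -G s)
      (f' := fun s => -F s) (B := fun _ => -Glow) (B' := fun _ => 0)
      (hcont.neg) (fun x hx => (hderiv x hx).neg) (by show -G 0 ≤ -Glow; linarith [hinitG.1])
      (fun x => hasDerivAt_const x (-Glow)) ?_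
    intro x hx hGx
    have hx0 := hx.1
    have hGx' : G x = Glow := by have h : -G x = -Glow := hGx; linarith
    have heq : eG x = -1 := by
      rw [heG, hGx']; field_simp; ring
    have hXref : Xref x = 0 := by
      rw [hXrefdef, heq, hΨ0 (-1) (by norm_num), mul_zero]
    have h2 := hStageII x hx0
    have h3 := hXerr x hx0
    have hXhat : Xhat x < p_X := by
      have := abs_lt.mp (lt_of_lt_of_le h2.1 h2.2)
      rw [hXref] at this; linarith [this.2]
    have hX : X x < p_X + Δ_X := by
      have := abs_le.mp h3; linarith [this.1]
    have hD1 := hD x hx0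
    have hSG0 : -(SGlow * Glow) ≤ -(S_G * Glow) := by nlinarith [hSG.1]
    have hmul : X x * (Glow + G_b) < (p_X + Δ_X) * (Glow + G_b) :=
      mul_lt_mul_of_pos_right hX hGlGb
    simp only [hF, hGx']
    nlinarith [hD1.1]
  have hmem : t ∈ Set.Icc (0:ℝ) t := Set.mem_Icc.mpr ⟨ht, le_rfl⟩
  exact ⟨by linarith [hlower t hmem], hupper t hmem⟩
end

section
/- Let ρ : [0, ∞) → ℝ and y : [0, ∞) → ℝ be differentiable functions with ρ(t) > 0 for all t ≥ 0 and |y(0)| < ρ(0). Suppose that for every t ≥ 0: if y(t) = ρ(t) then ẏ(t) < ρ̇(t), and if y(t) = −ρ(t) then ẏ(t) > −ρ̇(t). Then |y(t)| < ρ(t) for all t ≥ 0. -/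
/-! A barrier function that starts positive and has positive derivative at each of its zeros
stays nonnegative by the fencing theorem, and then stays positive: at a zero `t` the positive
derivative would force negative values just before `t`. Applied to `ρ - y` and `ρ + y`, this keeps
`y` strictly between `-ρ` and `ρ`. -/

open Set Filter Topology

theorem nonneg_of_deriv_pos_at_zeros {f : ℝ → ℝ} {a : ℝ}
    (hdiff : ∀ t ≥ a, DifferentiableAt ℝ f t) (ha : 0 < f a)
    (hzero : ∀ t ≥ a, f t = 0 → 0 < deriv f t) : ∀ t ≥ a, 0 ≤ f t := by
  intro t ht
  have hfence := image_le_of_deriv_right_lt_deriv_boundary (f := fun s => -f s)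
    (f' := fun s => -deriv f s) (B := fun _ => 0) (B' := fun _ => 0) (b := t)
    (fun s hs => (hdiff s hs.1).continuousAt.neg.continuousWithinAt)
    (fun s hs => (hdiff s hs.1).hasDerivAt.neg.hasDerivWithinAt)
    (by simpa using ha.le) (fun _ => hasDerivAt_const _ _)
    (fun s hs hfs => by simpa using hzero s hs.1 (neg_eq_zero.mp hfs))
  simpa using hfence ⟨ht, le_rfl⟩

theorem pos_of_deriv_pos_at_zeros {f : ℝ → ℝ} {a : ℝ}
    (hdiff : ∀ t ≥ a, DifferentiableAt ℝ f t) (ha : 0 < f a)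
    (hzero : ∀ t ≥ a, f t = 0 → 0 < deriv f t) : ∀ t ≥ a, 0 < f t := by
  intro t ht
  have hnonneg := nonneg_of_deriv_pos_at_zeros hdiff ha hzero
  refine (hnonneg t ht).lt_of_ne' fun hft => ?_
  have hat : a < t := ht.lt_of_ne fun hat => ha.ne' (hat ▸ hft)
  have hsign := eventually_nhdsWithin_sign_eq_of_deriv_pos (hzero t ht hft) hft
  obtain ⟨s, hs_sign, hs_mem⟩ :=
    ((hsign.filter_mono nhdsWithin_le_nhds).and (Ioo_mem_nhdsLT hat)).exists
  have hfs : f s < 0 := by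
    rwa [sign_neg (sub_neg.mpr hs_mem.2), sign_eq_neg_one_iff] at hs_sign
  exact hfs.not_ge (hnonneg s hs_mem.1.le)

theorem funnel_invariance_general
    (ρ y : ℝ → ℝ)
    (hρdiff : ∀ t ≥ (0 : ℝ), DifferentiableAt ℝ ρ t)
    (hydiff : ∀ t ≥ (0 : ℝ), DifferentiableAt ℝ y t)
    (hinit : |y 0| < ρ 0)
    (hup : ∀ t ≥ (0 : ℝ), y t = ρ t → deriv y t < deriv ρ t)
    (hlow : ∀ t ≥ (0 : ℝ), y t = -ρ t → deriv y t > -deriv ρ t) :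
    ∀ t ≥ (0 : ℝ), |y t| < ρ t := by
  have hupper : ∀ t ≥ (0 : ℝ), 0 < ρ t - y t := by
    refine pos_of_deriv_pos_at_zeros (fun t ht => (hρdiff t ht).sub (hydiff t ht))
      (by linarith [(abs_lt.mp hinit).2]) fun t ht hzero => ?_
    rw [deriv_fun_sub (hρdiff t ht) (hydiff t ht)]
    linarith [hup t ht (by linarith)]
  have hlower : ∀ t ≥ (0 : ℝ), 0 < ρ t + y t := by
    refine pos_of_deriv_pos_at_zeros (fun t ht => (hρdiff t ht).add (hydiff t ht))
      (by linarith [(abs_lt.mp hinit).1]) fun t ht hzero => ?_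
    rw [deriv_fun_add (hρdiff t ht) (hydiff t ht)]
    linarith [hlow t ht (by linarith)]
  intro t ht
  exact abs_lt.mpr ⟨by linarith [hlower t ht], by linarith [hupper t ht]⟩

/-- Funnel-invariance (barrier/viability) argument: a differentiable signal
that starts strictly inside a time-varying symmetric funnel, and whose
derivative strictly pushes inward whenever it touches a funnel boundary,
remains strictly inside the funnel for all time `t ≥ 0`. -/
theorem funnel_invariance
    (ρ y : ℝ → ℝ)
    (hρdiff : ∀ t ≥ (0 : ℝ), DifferentiableAt ℝ ρ t)
    (hydiff : ∀ t ≥ (0 : ℝ), DifferentiableAt ℝ y t)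
    (hρpos : ∀ t ≥ (0 : ℝ), 0 < ρ t)
    (hinit : |y 0| < ρ 0)
    (hup : ∀ t ≥ (0 : ℝ), y t = ρ t → deriv y t < deriv ρ t)
    (hlow : ∀ t ≥ (0 : ℝ), y t = -ρ t → deriv y t > -deriv ρ t) :
    ∀ t ≥ (0 : ℝ), |y t| < ρ t :=
  funnel_invariance_general ρ y hρdiff hydiff hinit hup hlow
end
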